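/- arXiv:1202.0247 — 2 statements merged into one kernel-verified Lean document; each statement's English description precedes it below -/
import Mathlib

section
/- (Riemann–Roch on finite sets) Let N be a nonempty finite subset of ℝ^n with deg(ν) = g − 1 for all ν ∈ N, let κ ∈ ℝ^n with deg(κ) = 2g − 2, and suppose ν ∈ N if and only if κ − ν ∈ N. Define ℓ(x) = min over ν ∈ N of deg((x − ν)⁺). Then for every x ∈ ℝ^n, ℓ(x) − ℓ(κ − x) = deg(x) − g + 1. -/
/-!
Since `a⁺ = a + (-a)⁺` and `(κ - x) - (κ - ν) = -(x - ν)`, every `ν ∈ N` satisfies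
`deg (x - ν)⁺ = (deg x - g + 1) + deg ((κ - x) - (κ - ν))⁺`. Taking the minimum over `ν ∈ N`,
and using that `ν ↦ κ - ν` permutes `N`, gives `ℓ x = (deg x - g + 1) + ℓ (κ - x)`.
-/

open Finset

theorem Finset.inf'_comp_sub_left {G α : Type*} [AddCommGroup G] [LinearOrder α]
    {s : Finset G} (hs : s.Nonempty) {κ : G} (hsymm : ∀ ν, ν ∈ s ↔ κ - ν ∈ s) (f : G → α) :
    s.inf' hs (fun ν => f (κ - ν)) = s.inf' hs f :=
  le_antisymm
    (le_inf' _ _ fun ν hν => by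
      simpa only [sub_sub_cancel] using inf'_le (fun ν => f (κ - ν)) ((hsymm ν).1 hν))
    (le_inf' _ _ fun ν hν => inf'_le _ ((hsymm ν).1 hν))

section OrderedGroup

variable {ι α : Type*} [AddCommGroup α] [LinearOrder α] [IsOrderedAddMonoid α]

theorem Finset.add_inf' (s : Finset ι) (f : ι → α) (a : α) (hs : s.Nonempty) :
    a + s.inf' hs f = s.inf' hs fun i => a + f i :=
  map_finset_inf' (OrderIso.addLeft a) hs f

theorem sum_max_sub_zero_eq_add_sum_max_sub_zero [Fintype ι] (x ν κ : ι → α) :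
    ∑ i, max (x i - ν i) 0 =
      (∑ i, x i - ∑ i, ν i) + ∑ i, max ((κ - x) i - (κ - ν) i) 0 := by
  have hmax (a : α) : max a 0 = a + max (-a) 0 := sub_eq_iff_eq_add.mp (max_zero_sub_eq_self a)
  simp only [hmax (x _ - ν _), Pi.sub_apply, sub_sub_sub_cancel_left, neg_sub, sum_add_distrib,
    sum_sub_distrib]

end OrderedGroup

theorem riemann_roch_finite_sets_general (n : ℕ) (g : ℝ)
    (N : Finset (Fin n → ℝ)) (hNne : N.Nonempty)
    (hdeg : ∀ ν ∈ N, (∑ i, ν i) = g - 1)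
    (κ : Fin n → ℝ)
    (hsym : ∀ ν, ν ∈ N ↔ κ - ν ∈ N)
    (ℓ : (Fin n → ℝ) → ℝ)
    (hℓ : ∀ x, ℓ x = N.inf' hNne (fun ν => ∑ i, max (x i - ν i) 0)) :
    ∀ x : Fin n → ℝ, ℓ x - ℓ (κ - x) = (∑ i, x i) - g + 1 := by
  intro x
  have hℓx : ℓ x = (∑ i, x i - g + 1) + ℓ (κ - x) := calc
    ℓ x = N.inf' hNne fun ν => (∑ i, x i - g + 1) + ∑ i, max ((κ - x) i - (κ - ν) i) 0 := by
        rw [hℓ]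
        refine inf'_congr hNne rfl fun ν hν => ?_
        rw [sum_max_sub_zero_eq_add_sum_max_sub_zero x ν κ, hdeg ν hν]
        ring
    _ = (∑ i, x i - g + 1) + ℓ (κ - x) := by
        rw [← add_inf', inf'_comp_sub_left hNne hsym (fun ν => ∑ i, max ((κ - x) i - ν i) 0), hℓ]
  linarith

theorem riemann_roch_finite_sets (n : ℕ) (hn : 1 ≤ n) (g : ℝ)
    (N : Finset (Fin n → ℝ)) (hNne : N.Nonempty)
    (hdeg : ∀ ν ∈ N, (∑ i, ν i) = g - 1)
    (κ : Fin n → ℝ) (hκ : (∑ i, κ i) = 2 * g - 2)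
    (hsym : ∀ ν, ν ∈ N ↔ κ - ν ∈ N)
    (ℓ : (Fin n → ℝ) → ℝ)
    (hℓ : ∀ x, ℓ x = N.inf' hNne (fun ν => ∑ i, max (x i - ν i) 0)) :
    ∀ x : Fin n → ℝ, ℓ x - ℓ (κ - x) = (∑ i, x i) - g + 1 :=
  riemann_roch_finite_sets_general n g N hNne hdeg κ hsym ℓ hℓ
end

section
/- Let n = 2, p a positive integer, g = p − 1, κ = (p−2, p−2), and N = {(p−1,−1) + m(p,−p) : m ∈ ℤ}. Define ℓ(x) = inf_{ν∈N} deg((x−ν)⁺) for x ∈ ℝ². Then for every x ∈ ℝ², ℓ(x) − ℓ(κ − x) = deg(x) − g + 1. -/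
/-!
Write `ν_m = (p - 1 + m p, -1 - m p)` for the points of `N` and `κ = (p - 2, p - 2)`.
Then `κ - ν_m = ν_{-m-1}`, so `(κ - x) - ν_m = -(x - ν_{-m-1})`, and `(-y)⁺ = y⁺ - y` turns
`deg(((κ - x) - ν_m)⁺)` into `deg((x - ν_{-m-1})⁺) - (deg x - g + 1)`.
As `m ↦ -m - 1` permutes `ℤ`, taking the infimum over `m` gives `ℓ(κ - x) = ℓ(x) - (deg x - g + 1)`.
-/

theorem max_neg_zero_eq {α : Type*} [AddCommGroup α] [LinearOrder α] [IsOrderedAddMonoid α]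
    (a : α) : max (-a) 0 = max a 0 - a :=
  (sub_sub_cancel a⁺ a⁻).symm.trans (congrArg _ (posPart_sub_negPart a))

namespace TwoVertex

/-- `deg((x - ν_m)⁺)`. -/
def degPosSub (p : ℝ) (x : ℝ × ℝ) (m : ℤ) : ℝ :=
  max (x.1 - (p - 1 + m * p)) 0 + max (x.2 - (-1 - m * p)) 0

noncomputable def rank (p : ℝ) (x : ℝ × ℝ) : ℝ := ⨅ m : ℤ, degPosSub p x m

theorem degPosSub_nonneg (p : ℝ) (x : ℝ × ℝ) (m : ℤ) : 0 ≤ degPosSub p x m :=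
  add_nonneg (le_max_right _ _) (le_max_right _ _)

theorem bddBelow_range_degPosSub (p : ℝ) (x : ℝ × ℝ) : BddBelow (Set.range (degPosSub p x)) :=
  ⟨0, by rintro _ ⟨m, rfl⟩; exact degPosSub_nonneg p x m⟩

theorem degPosSub_reflect (p : ℝ) (x : ℝ × ℝ) (m : ℤ) :
    degPosSub p ((p - 2, p - 2) - x) m = degPosSub p x (-m - 1) - (x.1 + x.2 - (p - 1) + 1) := by
  have h₁ : p - 2 - x.1 - (p - 1 + m * p) = -(x.1 - (p - 1 + ((-m - 1 : ℤ) : ℝ) * p)) := by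
    push_cast; ring
  have h₂ : p - 2 - x.2 - (-1 - m * p) = -(x.2 - (-1 - ((-m - 1 : ℤ) : ℝ) * p)) := by
    push_cast; ring
  simp only [degPosSub, Prod.fst_sub, Prod.snd_sub, h₁, h₂, max_neg_zero_eq]
  push_cast
  ring

theorem rank_reflect (p : ℝ) (x : ℝ × ℝ) :
    rank p ((p - 2, p - 2) - x) = rank p x - (x.1 + x.2 - (p - 1) + 1) := by
  let reflect : ℤ ≃ ℤ := (Equiv.neg ℤ).trans (Equiv.subRight 1)
  simp only [rank, degPosSub_reflect, ciInf_sub (bddBelow_range_degPosSub p x)]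
  exact reflect.iInf_comp (g := fun n => degPosSub p x n - _)

end TwoVertex

open TwoVertex in
theorem two_vertex_riemann_roch_general (p : ℤ)
    (ℓ : ℝ × ℝ → ℝ)
    (hℓ : ∀ x : ℝ × ℝ, ℓ x = sInf {d : ℝ | ∃ m : ℤ,
      d = max (x.1 - ((p : ℝ) - 1 + m * p)) 0 + max (x.2 - (-1 - m * p)) 0}) :
    ∀ x : ℝ × ℝ,
      ℓ x - ℓ (((p : ℝ) - 2, (p : ℝ) - 2) - x) = (x.1 + x.2) - ((p : ℝ) - 1) + 1 := by
  have hℓ_rank : ∀ x, ℓ x = rank p x := fun x => by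
    simp only [hℓ x, rank, iInf, Set.range, eq_comm, degPosSub]
  intro x
  rw [hℓ_rank, hℓ_rank, rank_reflect]
  ring

theorem two_vertex_riemann_roch (p : ℤ) (hp : 0 < p)
    (ℓ : ℝ × ℝ → ℝ)
    (hℓ : ∀ x : ℝ × ℝ, ℓ x = sInf {d : ℝ | ∃ m : ℤ,
      d = max (x.1 - ((p : ℝ) - 1 + m * p)) 0 + max (x.2 - (-1 - m * p)) 0}) :
    ∀ x : ℝ × ℝ,
      ℓ x - ℓ (((p : ℝ) - 2, (p : ℝ) - 2) - x) = (x.1 + x.2) - ((p : ℝ) - 1) + 1 :=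
  two_vertex_riemann_roch_general p ℓ hℓ
end
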